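/- (Young integral) Let $V, W$ be Banach spaces, $g \in \mathcal{C}^{\alpha}([0,T],V)$, $f \in \mathcal{C}^{\beta}([0,T],L(V,W))$ with $\alpha + \beta > 1$. Then the limit of Riemann sums $\int_s^t f_u \, dg_u := \lim_{|\mathcal{P}|\to 0} \sum_{[u,v]\in\mathcal{P}} f_u (g_v - g_u)$ exists for every $s < t$, and satisfies $\left|\int_s^t f_u\,dg_u - f_s(g_t - g_s)\right| \leq C \|f\|_{\beta}\|g\|_{\alpha}|t-s|^{\alpha+\beta}$ for a constant $C$ depending only on $\alpha+\beta$. -/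

import Mathlib

/-!
Young's sewing argument. Removing from a partition of `[s, t]` with `N + 1` intervals a point
whose two neighbours are at distance at most `2 (t - s) / N` (one exists by pigeonhole) changes
the Riemann sum by at most `‖f‖_β ‖g‖_α (2 (t - s) / N) ^ (α + β)`. Removing the points one by
one down to the trivial partition, the errors are summable since `α + β > 1`, which gives the
estimate against `f s (g t - g s)`. Applied to the blocks of a common refinement, it bounds the
difference of the Riemann sums of two partitions by a multiple of `mesh ^ (α + β - 1) (t - s)`,
so the sums over uniform partitions are Cauchy and every sum of small mesh is close to their limit.
-/

open Finset Filter Topology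

namespace Young

variable {E V W : Type*} [SeminormedAddCommGroup E] [NormedAddCommGroup V] [NormedSpace ℝ V]
  [NormedAddCommGroup W] [NormedSpace ℝ W]

def HolderBound (g : ℝ → E) (C a : ℝ) : Prop :=
  ∀ s t, s ≤ t → ‖g t - g s‖ ≤ C * (t - s) ^ a

theorem HolderBound.nonneg {g : ℝ → E} {C a : ℝ} (hg : HolderBound g C a) : 0 ≤ C := by
  simpa using (norm_nonneg _).trans (hg 0 1 zero_le_one)

theorem holderBound_comp_projIcc {g : ℝ → E} {C α a b : ℝ} (hab : a < b) (hα : 0 ≤ α)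
    (hg : ∀ s t, a ≤ s → s ≤ t → t ≤ b → ‖g t - g s‖ ≤ C * (t - s) ^ α) :
    HolderBound (fun t => g (Set.projIcc a b hab.le t)) C α := by
  have hC : 0 ≤ C :=
    nonneg_of_mul_nonneg_left ((norm_nonneg _).trans (hg a b le_rfl hab.le le_rfl))
      (Real.rpow_pos_of_pos (sub_pos.2 hab) α)
  intro s t hst
  have hmono : (Set.projIcc a b hab.le s : ℝ) ≤ Set.projIcc a b hab.le t :=
    Set.monotone_projIcc hab.le hst
  have hdist : (Set.projIcc a b hab.le t : ℝ) - Set.projIcc a b hab.le s ≤ t - s := by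
    have := Set.abs_projIcc_sub_projIcc (c := t) (d := s) hab.le
    rw [abs_of_nonneg (sub_nonneg.2 hst)] at this
    exact (le_abs_self _).trans this
  calc _ ≤ C * ((Set.projIcc a b hab.le t : ℝ) - Set.projIcc a b hab.le s) ^ α :=
        hg _ _ (Set.projIcc a b hab.le s).2.1 hmono (Set.projIcc a b hab.le t).2.2
    _ ≤ C * (t - s) ^ α := by gcongr

def riemannSum (f : ℝ → V →L[ℝ] W) (g : ℝ → V) (τ : ℕ → ℝ) (N : ℕ) : W :=
  ∑ i ∈ range N, f (τ i) (g (τ (i + 1)) - g (τ i))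

variable {f : ℝ → V →L[ℝ] W} {g : ℝ → V} {Cf Cg α β : ℝ}

theorem monotone_comp_min {τ : ℕ → ℝ} {N : ℕ} (hτ : ∀ i < N, τ i ≤ τ (i + 1)) :
    Monotone fun i => τ (min i N) :=
  monotone_nat_of_le_succ fun i => by
    rcases lt_or_ge i N with hi | hi
    · simpa [min_eq_left hi.le, min_eq_left (Nat.succ_le_of_lt hi)] using hτ i hi
    · simp [min_eq_right hi, min_eq_right (hi.trans i.le_succ)]

theorem riemannSum_congr {τ τ' : ℕ → ℝ} {N : ℕ} (h : ∀ i ≤ N, τ i = τ' i) :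
    riemannSum f g τ N = riemannSum f g τ' N :=
  sum_congr rfl fun i hi => by
    rw [h i (mem_range.1 hi).le, h (i + 1) (mem_range.1 hi)]

theorem riemannSum_succ (τ : ℕ → ℝ) (N : ℕ) :
    riemannSum f g τ (N + 1) = riemannSum f g τ N + f (τ N) (g (τ (N + 1)) - g (τ N)) :=
  sum_range_succ _ _

theorem riemannSum_add (τ : ℕ → ℝ) (m r : ℕ) :
    riemannSum f g τ (m + r) = riemannSum f g τ m + riemannSum f g (fun i => τ (m + i)) r := by
  simp only [riemannSum, sum_range_add, add_assoc]

def succAbove (p m : ℕ) : ℕ := if m < p then m else m + 1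

theorem succAbove_mono (p : ℕ) : Monotone (succAbove p) := by
  intro m n hmn
  unfold succAbove
  split_ifs <;> omega

theorem riemannSum_succ_eq_succAbove (τ : ℕ → ℝ) {j N : ℕ} (hj : j < N) :
    riemannSum f g τ (N + 1) = riemannSum f g (τ ∘ succAbove (j + 1)) N
      + (f (τ (j + 1)) - f (τ j)) (g (τ (j + 2)) - g (τ (j + 1))) := by
  obtain ⟨r, rfl⟩ := Nat.exists_eq_add_of_lt hj
  have hhead : riemannSum f g (τ ∘ succAbove (j + 1)) j = riemannSum f g τ j :=
    riemannSum_congr fun i hi => by simp [succAbove, Nat.lt_succ_of_le hi]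
  have htail : (fun i => (τ ∘ succAbove (j + 1)) (j + 1 + i)) = fun i => τ (j + 2 + i) := by
    funext i
    simp only [Function.comp_apply, succAbove, if_neg (Nat.not_lt.2 (Nat.le_add_right _ _))]
    ring_nf
  rw [show j + r + 1 + 1 = j + 2 + r by ring, show j + r + 1 = j + 1 + r by ring,
    riemannSum_add τ (j + 2), riemannSum_add _ (j + 1), htail, riemannSum_succ,
    riemannSum_succ, riemannSum_succ, hhead]
  simp only [Function.comp_apply, succAbove, lt_add_one, if_true, lt_irrefl, if_false,
    map_sub, sub_apply]
  abel

/-- Pigeonhole: the `N` gaps `τ (j + 2) - τ j` add up to at most `2 (τ (N + 1) - τ 0)`. -/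
theorem exists_mul_sub_le {τ : ℕ → ℝ} (hτ : Monotone τ) {N : ℕ} (hN : 0 < N) :
    ∃ j < N, N * (τ (j + 2) - τ j) ≤ 2 * (τ (N + 1) - τ 0) := by
  have hsum : ∑ j ∈ range N, (τ (j + 2) - τ j) ≤ 2 * (τ (N + 1) - τ 0) := by
    have htel : ∑ j ∈ range N, (τ (j + 2) - τ j) = (τ (N + 1) - τ 1) + (τ N - τ 0) := by
      rw [← sum_range_sub (fun i => τ (i + 1)), ← sum_range_sub τ, ← sum_add_distrib]
      exact sum_congr rfl fun j _ => by ring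
    linarith [hτ (zero_le_one' ℕ), hτ N.le_succ]
  obtain ⟨j, hj, hle⟩ := exists_le_of_sum_le (f := fun j => N * (τ (j + 2) - τ j))
    (g := fun _ => 2 * (τ (N + 1) - τ 0)) (nonempty_range_iff.2 hN.ne') (by
      rw [← mul_sum, sum_const, card_range, nsmul_eq_mul]
      exact mul_le_mul_of_nonneg_left hsum (Nat.cast_nonneg N))
  exact ⟨j, mem_range.1 hj, hle⟩

theorem norm_apply_sub_apply_le (hf : HolderBound f Cf β) (hg : HolderBound g Cg α)
    (hα : 0 ≤ α) (hβ : 0 ≤ β) {a b c : ℝ} (hab : a ≤ b) (hbc : b ≤ c) :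
    ‖(f b - f a) (g c - g b)‖ ≤ Cf * Cg * (c - a) ^ (α + β) := by
  have hfab : ‖f b - f a‖ ≤ Cf * (c - a) ^ β := (hf a b hab).trans <|
    mul_le_mul_of_nonneg_left (Real.rpow_le_rpow (sub_nonneg.2 hab) (by linarith) hβ) hf.nonneg
  have hgbc : ‖g c - g b‖ ≤ Cg * (c - a) ^ α := (hg b c hbc).trans <|
    mul_le_mul_of_nonneg_left (Real.rpow_le_rpow (sub_nonneg.2 hbc) (by linarith) hα) hg.nonneg
  calc ‖(f b - f a) (g c - g b)‖ ≤ ‖f b - f a‖ * ‖g c - g b‖ := (f b - f a).le_opNorm _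
    _ ≤ (Cf * (c - a) ^ β) * (Cg * (c - a) ^ α) :=
        mul_le_mul hfab hgbc (norm_nonneg _) ((norm_nonneg _).trans hfab)
    _ = Cf * Cg * (c - a) ^ (α + β) := by
        rw [Real.rpow_add_of_nonneg (sub_nonneg.2 (hab.trans hbc)) hα hβ]
        ring

theorem norm_riemannSum_sub_le_sum (hf : HolderBound f Cf β) (hg : HolderBound g Cg α)
    (hα : 0 ≤ α) (hβ : 0 ≤ β) {τ : ℕ → ℝ} (hτ : Monotone τ) (N : ℕ) :
    ‖riemannSum f g τ N - f (τ 0) (g (τ N) - g (τ 0))‖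
      ≤ Cf * Cg * (2 * (τ N - τ 0)) ^ (α + β) * ∑ n ∈ range N, 1 / (n : ℝ) ^ (α + β) := by
  induction N generalizing τ with
  | zero => simp [riemannSum]
  | succ N ih =>
    have hCf := hf.nonneg
    have hCg := hg.nonneg
    have hΔ : 0 ≤ τ (N + 1) - τ 0 := sub_nonneg.2 (hτ (Nat.zero_le (N + 1)))
    rcases N.eq_zero_or_pos with rfl | hN
    · rw [riemannSum_succ, riemannSum, sum_range_zero, zero_add, sub_self, norm_zero]
      have := Real.rpow_nonneg (mul_nonneg zero_le_two hΔ) (α + β)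
      positivity
    obtain ⟨j, hj, hgap⟩ := exists_mul_sub_le hτ hN
    have hrec := ih (hτ.comp (succAbove_mono (j + 1)))
    simp only [Function.comp_apply, succAbove, Nat.zero_lt_succ, if_true,
      if_neg (show ¬N < j + 1 by omega)] at hrec
    have hNpos : (0 : ℝ) < N := Nat.cast_pos.2 hN
    have hstep : ‖(f (τ (j + 1)) - f (τ j)) (g (τ (j + 2)) - g (τ (j + 1)))‖
        ≤ Cf * Cg * (2 * (τ (N + 1) - τ 0)) ^ (α + β) * (1 / (N : ℝ) ^ (α + β)) :=
      calc _ ≤ Cf * Cg * (τ (j + 2) - τ j) ^ (α + β) :=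
            norm_apply_sub_apply_le hf hg hα hβ (hτ j.le_succ) (hτ (j + 1).le_succ)
        _ ≤ Cf * Cg * (2 * (τ (N + 1) - τ 0) / N) ^ (α + β) := by
            gcongr
            · exact sub_nonneg.2 (hτ (by omega))
            · rwa [le_div_iff₀ hNpos, mul_comm]
        _ = _ := by
            rw [Real.div_rpow (mul_nonneg zero_le_two hΔ) hNpos.le]
            ring
    rw [riemannSum_succ_eq_succAbove τ hj, sum_range_succ, mul_add]
    calc _ = ‖(riemannSum f g (τ ∘ succAbove (j + 1)) N - f (τ 0) (g (τ (N + 1)) - g (τ 0)))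
          + (f (τ (j + 1)) - f (τ j)) (g (τ (j + 2)) - g (τ (j + 1)))‖ := by
          congr 1; abel
      _ ≤ _ := norm_add_le_of_le hrec hstep

noncomputable def youngConst (p : ℝ) : ℝ := 2 ^ p * ∑' n : ℕ, 1 / (n : ℝ) ^ p

theorem youngConst_pos {p : ℝ} (hp : 1 < p) : 0 < youngConst p :=
  mul_pos (by positivity)
    ((Real.summable_one_div_nat_rpow.2 hp).tsum_pos (fun _ => by positivity) 1 (by simp))

theorem norm_riemannSum_sub_le (hf : HolderBound f Cf β) (hg : HolderBound g Cg α)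
    (hα : 0 ≤ α) (hβ : 0 ≤ β) (hαβ : 1 < α + β) {τ : ℕ → ℝ} (hτ : Monotone τ) (N : ℕ) :
    ‖riemannSum f g τ N - f (τ 0) (g (τ N) - g (τ 0))‖
      ≤ youngConst (α + β) * Cf * Cg * (τ N - τ 0) ^ (α + β) := by
  have hΔ : 0 ≤ τ N - τ 0 := sub_nonneg.2 (hτ (Nat.zero_le N))
  calc _ ≤ Cf * Cg * (2 * (τ N - τ 0)) ^ (α + β) * ∑ n ∈ range N, 1 / (n : ℝ) ^ (α + β) :=
        norm_riemannSum_sub_le_sum hf hg hα hβ hτ N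
    _ ≤ Cf * Cg * (2 * (τ N - τ 0)) ^ (α + β) * ∑' n : ℕ, 1 / (n : ℝ) ^ (α + β) :=
        mul_le_mul_of_nonneg_left
          ((Real.summable_one_div_nat_rpow.2 hαβ).sum_le_tsum _ fun _ _ => by positivity)
          (mul_nonneg (mul_nonneg hf.nonneg hg.nonneg) (Real.rpow_nonneg (by linarith) _))
    _ = _ := by
        rw [Real.mul_rpow zero_le_two hΔ, youngConst]
        ring

theorem norm_riemannSum_sub_riemannSum_comp_le (hf : HolderBound f Cf β)
    (hg : HolderBound g Cg α) (hα : 0 ≤ α) (hβ : 0 ≤ β) (hαβ : 1 < α + β) {σ : ℕ → ℝ}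
    {k : ℕ → ℕ} (hσ : Monotone σ) (hk : Monotone k) (hk0 : k 0 = 0) (N : ℕ) :
    ‖riemannSum f g σ (k N) - riemannSum f g (σ ∘ k) N‖
      ≤ youngConst (α + β) * Cf * Cg * ∑ i ∈ range N, (σ (k (i + 1)) - σ (k i)) ^ (α + β) := by
  induction N with
  | zero => simp [hk0, riemannSum]
  | succ N ih =>
    obtain ⟨r, hr⟩ := Nat.exists_eq_add_of_le (hk N.le_succ)
    have hblock := norm_riemannSum_sub_le hf hg hα hβ hαβ
      (fun a b hab => hσ (Nat.add_le_add_left hab (k N)) : Monotone fun i => σ (k N + i)) r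
    simp only [add_zero, ← hr] at hblock
    have hsplit : riemannSum f g σ (k (N + 1))
        = riemannSum f g σ (k N) + riemannSum f g (fun i => σ (k N + i)) r := by
      rw [hr, riemannSum_add]
    rw [hsplit, riemannSum_succ, sum_range_succ, mul_add]
    calc _ = ‖(riemannSum f g σ (k N) - riemannSum f g (σ ∘ k) N)
          + (riemannSum f g (fun i => σ (k N + i)) r
            - f (σ (k N)) (g (σ (k (N + 1))) - g (σ (k N))))‖ := by
          congr 1; simp only [Function.comp_apply]; abel
      _ ≤ _ := norm_add_le_of_le ih hblock

theorem exists_monotone_strictMonoOn_image (P : Finset ℝ) (hP : P.Nonempty) :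
    ∃ (M : ℕ) (σ : ℕ → ℝ), Monotone σ ∧ StrictMonoOn σ (Set.Iic M) ∧ σ '' Set.Iic M = P := by
  obtain ⟨M, hM⟩ := Nat.exists_eq_succ_of_ne_zero hP.card_pos.ne'
  set e := P.orderEmbOfFin hM
  refine ⟨M, fun j => e (Fin.clamp j M), e.monotone.comp Fin.clamp_monotone, ?_, ?_⟩
  · intro i hi j hj hij
    exact e.strictMono (by
      simpa [Fin.lt_def, min_eq_left (Set.mem_Iic.1 hi), min_eq_left (Set.mem_Iic.1 hj)] using hij)
  · rw [← P.range_orderEmbOfFin hM]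
    ext x
    constructor
    · rintro ⟨j, -, rfl⟩
      exact ⟨_, rfl⟩
    · rintro ⟨j, rfl⟩
      exact ⟨j, Nat.lt_succ_iff.1 j.2, congrArg e (Fin.ext (by simp [Nat.lt_succ_iff.1 j.2]))⟩

theorem exists_monotone_index {σ τ : ℕ → ℝ} {M N : ℕ} (hσ : StrictMonoOn σ (Set.Iic M))
    (hτ : Monotone τ) (hτσ : ∀ i ≤ N, τ i ∈ σ '' Set.Iic M) (h0 : τ 0 ≤ σ 0) (hN : σ M ≤ τ N) :
    ∃ k : ℕ → ℕ, Monotone k ∧ k 0 = 0 ∧ k N = M ∧ ∀ i ≤ N, σ (k i) = τ i := by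
  choose! c hcM hc using hτσ
  set k : ℕ → ℕ := fun i => c (min i N)
  have hkM : ∀ i, k i ∈ Set.Iic M := fun i => hcM _ (min_le_right i N)
  have hk : ∀ i, σ (k i) = τ (min i N) := fun i => hc _ (min_le_right i N)
  refine ⟨k, fun i j hij => ?_, ?_, ?_, fun i hi => by rw [hk, min_eq_left hi]⟩
  · rw [← hσ.le_iff_le (hkM i) (hkM j), hk, hk]
    exact hτ (min_le_min_right N hij)
  · rw [← Nat.le_zero, ← hσ.le_iff_le (hkM 0) (Nat.zero_le M), hk, Nat.zero_min]
    exact h0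
  · refine le_antisymm (hkM N) ?_
    rw [← hσ.le_iff_le (Set.mem_Iic.2 le_rfl) (hkM N), hk, min_self]
    exact hN

theorem exists_common_refinement {τ₁ τ₂ : ℕ → ℝ} {N₁ N₂ : ℕ} (hτ₁ : Monotone τ₁)
    (hτ₂ : Monotone τ₂) (h0 : τ₁ 0 = τ₂ 0) (hN : τ₁ N₁ = τ₂ N₂) :
    ∃ σ : ℕ → ℝ, Monotone σ ∧ ∃ k₁ k₂ : ℕ → ℕ,
      Monotone k₁ ∧ k₁ 0 = 0 ∧ (∀ i ≤ N₁, σ (k₁ i) = τ₁ i) ∧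
      Monotone k₂ ∧ k₂ 0 = 0 ∧ (∀ i ≤ N₂, σ (k₂ i) = τ₂ i) ∧ k₁ N₁ = k₂ N₂ := by
  set P := (range (N₁ + 1)).image τ₁ ∪ (range (N₂ + 1)).image τ₂
  have hP : ∀ x ∈ P, τ₁ 0 ≤ x ∧ x ≤ τ₁ N₁ := by
    simp only [P, mem_union, mem_image, mem_range]
    rintro x (⟨i, hi, rfl⟩ | ⟨i, hi, rfl⟩)
    · exact ⟨hτ₁ (Nat.zero_le i), hτ₁ (by omega)⟩
    · exact ⟨h0 ▸ hτ₂ (Nat.zero_le i), hN ▸ hτ₂ (by omega)⟩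
  obtain ⟨M, σ, hσ, hσM, hσP⟩ :=
    exists_monotone_strictMonoOn_image P ⟨τ₁ 0, mem_union_left _ (mem_image_of_mem τ₁ (by simp))⟩
  have hσ0 := hP (σ 0) (by rw [← mem_coe, ← hσP]; exact Set.mem_image_of_mem σ (Nat.zero_le M))
  have hσN := hP (σ M) (by rw [← mem_coe, ← hσP]; exact Set.mem_image_of_mem σ (le_refl M))
  obtain ⟨k₁, hk₁, hk₁0, hk₁N, hστ₁⟩ := exists_monotone_index (N := N₁) hσM hτ₁
    (fun i hi => by
      rw [hσP, mem_coe]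
      exact mem_union_left _ (mem_image_of_mem τ₁ (mem_range.2 (by omega)))) hσ0.1 hσN.2
  obtain ⟨k₂, hk₂, hk₂0, hk₂N, hστ₂⟩ := exists_monotone_index (N := N₂) hσM hτ₂
    (fun i hi => by
      rw [hσP, mem_coe]
      exact mem_union_right _ (mem_image_of_mem τ₂ (mem_range.2 (by omega))))
    (h0 ▸ hσ0.1) (hN ▸ hσN.2)
  exact ⟨σ, hσ, k₁, k₂, hk₁, hk₁0, hστ₁, hk₂, hk₂0, hστ₂, hk₁N.trans hk₂N.symm⟩

theorem norm_riemannSum_sub_riemannSum_le (hf : HolderBound f Cf β) (hg : HolderBound g Cg α)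
    (hα : 0 ≤ α) (hβ : 0 ≤ β) (hαβ : 1 < α + β) {τ₁ τ₂ : ℕ → ℝ} {N₁ N₂ : ℕ}
    (hτ₁ : Monotone τ₁) (hτ₂ : Monotone τ₂) (h0 : τ₁ 0 = τ₂ 0) (hN : τ₁ N₁ = τ₂ N₂) :
    ‖riemannSum f g τ₁ N₁ - riemannSum f g τ₂ N₂‖
      ≤ youngConst (α + β) * Cf * Cg * (∑ i ∈ range N₁, (τ₁ (i + 1) - τ₁ i) ^ (α + β)
        + ∑ i ∈ range N₂, (τ₂ (i + 1) - τ₂ i) ^ (α + β)) := by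
  obtain ⟨σ, hσ, k₁, k₂, hk₁, hk₁0, hστ₁, hk₂, hk₂0, hστ₂, hk⟩ :=
    exists_common_refinement hτ₁ hτ₂ h0 hN
  have hrefine : ∀ {k : ℕ → ℕ} {τ : ℕ → ℝ} {N : ℕ}, Monotone k → k 0 = 0 →
      (∀ i ≤ N, σ (k i) = τ i) → ‖riemannSum f g σ (k N) - riemannSum f g τ N‖
        ≤ youngConst (α + β) * Cf * Cg * ∑ i ∈ range N, (τ (i + 1) - τ i) ^ (α + β) := by
    intro k τ N hk hk0 hστ
    have := norm_riemannSum_sub_riemannSum_comp_le hf hg hα hβ hαβ hσ hk hk0 N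
    rwa [riemannSum_congr (τ := σ ∘ k) hστ, sum_congr rfl fun i hi => by
      rw [hστ i (mem_range.1 hi).le, hστ (i + 1) (mem_range.1 hi)]] at this
  calc _ = ‖(riemannSum f g σ (k₂ N₂) - riemannSum f g τ₂ N₂)
        - (riemannSum f g σ (k₁ N₁) - riemannSum f g τ₁ N₁)‖ := by
        rw [hk]; congr 1; abel
    _ ≤ _ := by
        rw [mul_add, add_comm]
        exact (norm_sub_le _ _).trans (add_le_add (hrefine hk₂ hk₂0 hστ₂) (hrefine hk₁ hk₁0 hστ₁))

theorem sum_rpow_sub_le {τ : ℕ → ℝ} {N : ℕ} {p δ : ℝ} (hp : 1 ≤ p) (hτ : Monotone τ)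
    (hδ : ∀ i < N, τ (i + 1) - τ i ≤ δ) :
    ∑ i ∈ range N, (τ (i + 1) - τ i) ^ p ≤ δ ^ (p - 1) * (τ N - τ 0) := by
  rw [← sum_range_sub τ, mul_sum]
  refine sum_le_sum fun i hi => ?_
  have hΔ : 0 ≤ τ (i + 1) - τ i := sub_nonneg.2 (hτ i.le_succ)
  calc (τ (i + 1) - τ i) ^ p = (τ (i + 1) - τ i) ^ (p - 1) * (τ (i + 1) - τ i) := by
        conv_lhs => rw [show p = (p - 1) + 1 by ring]
        rw [Real.rpow_add_of_nonneg hΔ (by linarith) zero_le_one, Real.rpow_one]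
    _ ≤ δ ^ (p - 1) * (τ (i + 1) - τ i) := by
        gcongr
        exact hδ i (mem_range.1 hi)

theorem norm_riemannSum_sub_riemannSum_le_mesh (hf : HolderBound f Cf β)
    (hg : HolderBound g Cg α) (hα : 0 ≤ α) (hβ : 0 ≤ β) (hαβ : 1 < α + β) {τ₁ τ₂ : ℕ → ℝ}
    {N₁ N₂ : ℕ} (hτ₁ : Monotone τ₁) (hτ₂ : Monotone τ₂) (h0 : τ₁ 0 = τ₂ 0) (hN : τ₁ N₁ = τ₂ N₂)
    {δ₁ δ₂ : ℝ} (hδ₁ : ∀ i < N₁, τ₁ (i + 1) - τ₁ i ≤ δ₁) (hδ₂ : ∀ i < N₂, τ₂ (i + 1) - τ₂ i ≤ δ₂) :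
    ‖riemannSum f g τ₁ N₁ - riemannSum f g τ₂ N₂‖ ≤ youngConst (α + β) * Cf * Cg
      * (τ₁ N₁ - τ₁ 0) * (δ₁ ^ (α + β - 1) + δ₂ ^ (α + β - 1)) := by
  have hK : 0 ≤ youngConst (α + β) * Cf * Cg :=
    mul_nonneg (mul_nonneg (youngConst_pos hαβ).le hf.nonneg) hg.nonneg
  have h₁ := sum_rpow_sub_le hαβ.le hτ₁ hδ₁
  have h₂ := sum_rpow_sub_le hαβ.le hτ₂ hδ₂
  rw [← h0, ← hN] at h₂
  calc _ ≤ youngConst (α + β) * Cf * Cg * (∑ i ∈ range N₁, (τ₁ (i + 1) - τ₁ i) ^ (α + β)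
        + ∑ i ∈ range N₂, (τ₂ (i + 1) - τ₂ i) ^ (α + β)) :=
        norm_riemannSum_sub_riemannSum_le hf hg hα hβ hαβ hτ₁ hτ₂ h0 hN
    _ ≤ youngConst (α + β) * Cf * Cg * (δ₁ ^ (α + β - 1) * (τ₁ N₁ - τ₁ 0)
        + δ₂ ^ (α + β - 1) * (τ₁ N₁ - τ₁ 0)) := mul_le_mul_of_nonneg_left (add_le_add h₁ h₂) hK
    _ = _ := by ring

noncomputable def uniformPartition (s t : ℝ) (n i : ℕ) : ℝ := s + i * ((t - s) / (n + 1))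

@[simp]
theorem uniformPartition_zero (s t : ℝ) (n : ℕ) : uniformPartition s t n 0 = s := by
  simp [uniformPartition]

@[simp]
theorem uniformPartition_last (s t : ℝ) (n : ℕ) : uniformPartition s t n (n + 1) = t := by
  unfold uniformPartition
  push_cast
  field_simp
  ring

theorem uniformPartition_succ_sub (s t : ℝ) (n i : ℕ) :
    uniformPartition s t n (i + 1) - uniformPartition s t n i = (t - s) / (n + 1) := by
  unfold uniformPartition
  push_cast
  ring

theorem monotone_uniformPartition {s t : ℝ} (hst : s ≤ t) (n : ℕ) :
    Monotone (uniformPartition s t n) := fun i j hij => by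
  have hmesh : 0 ≤ (t - s) / (n + 1) := div_nonneg (sub_nonneg.2 hst) (by positivity)
  unfold uniformPartition
  gcongr

theorem tendsto_uniformMesh_rpow (s t : ℝ) {q : ℝ} (hq : 0 < q) :
    Tendsto (fun n : ℕ => ((t - s) / (n + 1)) ^ q) atTop (𝓝 0) := by
  have h : Tendsto (fun n : ℕ => (t - s) / ((n : ℝ) + 1)) atTop (𝓝 0) := by
    simpa [div_eq_mul_inv] using tendsto_one_div_add_atTop_nhds_zero_nat.const_mul (t - s)
  simpa [Real.zero_rpow hq.ne'] using h.rpow_const (Or.inr hq.le)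

theorem norm_riemannSum_sub_riemannSum_uniformPartition_le (hf : HolderBound f Cf β)
    (hg : HolderBound g Cg α) (hα : 0 ≤ α) (hβ : 0 ≤ β) (hαβ : 1 < α + β) {τ : ℕ → ℝ} {N : ℕ}
    {s t δ : ℝ} (hτ : Monotone τ) (h0 : τ 0 = s) (hN : τ N = t)
    (hδ : ∀ i < N, τ (i + 1) - τ i ≤ δ) (n : ℕ) :
    ‖riemannSum f g τ N - riemannSum f g (uniformPartition s t n) (n + 1)‖
      ≤ youngConst (α + β) * Cf * Cg * (t - s)
        * (δ ^ (α + β - 1) + ((t - s) / (n + 1)) ^ (α + β - 1)) := by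
  have hst : s ≤ t := h0 ▸ hN ▸ hτ (Nat.zero_le N)
  have := norm_riemannSum_sub_riemannSum_le_mesh (N₂ := n + 1) hf hg hα hβ hαβ hτ
    (monotone_uniformPartition hst n) (by simp [h0]) (by simp [hN]) hδ
    (fun i _ => (uniformPartition_succ_sub s t n i).le)
  rwa [h0, hN] at this

/-- A junk value unless the limit exists, which `tendsto_youngIntegral` provides for `s ≤ t`. -/
noncomputable def youngIntegral (f : ℝ → V →L[ℝ] W) (g : ℝ → V) (s t : ℝ) : W :=
  limUnder atTop fun n => riemannSum f g (uniformPartition s t n) (n + 1)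

theorem tendsto_youngIntegral [CompleteSpace W] (hf : HolderBound f Cf β)
    (hg : HolderBound g Cg α) (hα : 0 ≤ α) (hβ : 0 ≤ β) (hαβ : 1 < α + β) {s t : ℝ}
    (hst : s ≤ t) :
    Tendsto (fun n => riemannSum f g (uniformPartition s t n) (n + 1)) atTop
      (𝓝 (youngIntegral f g s t)) := by
  refine CauchySeq.tendsto_limUnder (Metric.cauchySeq_iff.2 fun ε hε => ?_)
  set A := youngConst (α + β) * Cf * Cg * (t - s)
  have hA : Tendsto (fun n : ℕ => A * ((t - s) / (n + 1)) ^ (α + β - 1)) atTop (𝓝 0) := by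
    simpa using (tendsto_uniformMesh_rpow s t (sub_pos.2 hαβ)).const_mul A
  obtain ⟨N, hN⟩ := eventually_atTop.1 (hA.eventually (gt_mem_nhds (half_pos hε)))
  refine ⟨N, fun m hm n hn => ?_⟩
  rw [dist_eq_norm]
  calc _ ≤ A * (((t - s) / (m + 1)) ^ (α + β - 1) + ((t - s) / (n + 1)) ^ (α + β - 1)) :=
        norm_riemannSum_sub_riemannSum_uniformPartition_le hf hg hα hβ hαβ
          (monotone_uniformPartition hst m) (uniformPartition_zero s t m)
          (uniformPartition_last s t m) (fun i _ => (uniformPartition_succ_sub s t m i).le) n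
    _ < ε := by
        rw [mul_add]
        linarith [hN m hm, hN n hn]

theorem norm_riemannSum_sub_youngIntegral_le [CompleteSpace W] (hf : HolderBound f Cf β)
    (hg : HolderBound g Cg α) (hα : 0 ≤ α) (hβ : 0 ≤ β) (hαβ : 1 < α + β) {τ : ℕ → ℝ} {N : ℕ}
    {s t δ : ℝ} (hτ : Monotone τ) (h0 : τ 0 = s) (hN : τ N = t)
    (hδ : ∀ i < N, τ (i + 1) - τ i ≤ δ) :
    ‖riemannSum f g τ N - youngIntegral f g s t‖
      ≤ youngConst (α + β) * Cf * Cg * (t - s) * δ ^ (α + β - 1) := by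
  have hst : s ≤ t := h0 ▸ hN ▸ hτ (Nat.zero_le N)
  have hbound : Tendsto (fun n : ℕ => youngConst (α + β) * Cf * Cg * (t - s)
      * (δ ^ (α + β - 1) + ((t - s) / (n + 1)) ^ (α + β - 1))) atTop
      (𝓝 (youngConst (α + β) * Cf * Cg * (t - s) * δ ^ (α + β - 1))) := by
    simpa using ((tendsto_uniformMesh_rpow s t (sub_pos.2 hαβ)).const_add
      (δ ^ (α + β - 1))).const_mul (youngConst (α + β) * Cf * Cg * (t - s))
  exact le_of_tendsto_of_tendsto'
    ((tendsto_youngIntegral hf hg hα hβ hαβ hst).const_sub _).norm hbound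
    (norm_riemannSum_sub_riemannSum_uniformPartition_le hf hg hα hβ hαβ hτ h0 hN hδ)

theorem norm_youngIntegral_sub_le [CompleteSpace W] (hf : HolderBound f Cf β)
    (hg : HolderBound g Cg α) (hα : 0 ≤ α) (hβ : 0 ≤ β) (hαβ : 1 < α + β) {s t : ℝ}
    (hst : s ≤ t) :
    ‖youngIntegral f g s t - f s (g t - g s)‖
      ≤ youngConst (α + β) * Cf * Cg * (t - s) ^ (α + β) :=
  le_of_tendsto' ((tendsto_youngIntegral hf hg hα hβ hαβ hst).sub_const _).norm fun n => by
    simpa using norm_riemannSum_sub_le hf hg hα hβ hαβ (monotone_uniformPartition hst n) (n + 1)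

theorem exists_pos_mul_rpow_lt (A : ℝ) {q ε : ℝ} (hq : 0 < q) (hε : 0 < ε) :
    ∃ δ > 0, A * δ ^ q < ε := by
  have h : Tendsto (fun δ : ℝ => A * δ ^ q) (𝓝[>] 0) (𝓝 0) := by
    simpa [Real.zero_rpow hq.ne'] using
      ((Real.continuousAt_rpow_const 0 q (Or.inr hq.le)).tendsto.const_mul A).mono_left
        nhdsWithin_le_nhds
  obtain ⟨δ, hδε, hδ⟩ := ((h.eventually (gt_mem_nhds hε)).and self_mem_nhdsWithin).exists
  exact ⟨δ, hδ, hδε⟩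

end Young

open Young in
theorem young_integral_general
    (α β T : ℝ) (hα0 : 0 < α) (hβ0 : 0 < β)
    (hαβ : 1 < α + β) (hT : 0 < T) :
    ∃ C : ℝ, 0 < C ∧
      ∀ (V W : Type) (_ : NormedAddCommGroup V) (_ : NormedSpace ℝ V),
      ∀ (_ : NormedAddCommGroup W) (_ : NormedSpace ℝ W) (_ : CompleteSpace W),
      ∀ (g : ℝ → V) (f : ℝ → V →L[ℝ] W) (Cg Cf : ℝ),
        (∀ s t, 0 ≤ s → s ≤ t → t ≤ T → ‖g t - g s‖ ≤ Cg * (t - s) ^ α) →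
        (∀ s t, 0 ≤ s → s ≤ t → t ≤ T → ‖f t - f s‖ ≤ Cf * (t - s) ^ β) →
        ∃ I : ℝ → ℝ → W,
          (∀ s t, 0 ≤ s → s ≤ t → t ≤ T → ∀ ε > 0, ∃ δ > 0,
            ∀ (N : ℕ) (τ : ℕ → ℝ), 0 < N → τ 0 = s → τ N = t →
              (∀ i < N, τ i < τ (i + 1)) → (∀ i < N, τ (i + 1) - τ i < δ) →
              ‖(∑ i ∈ Finset.range N, f (τ i) (g (τ (i + 1)) - g (τ i))) - I s t‖ < ε) ∧
          (∀ s t, 0 ≤ s → s ≤ t → t ≤ T →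
            ‖I s t - f s (g t - g s)‖ ≤ C * Cf * Cg * (t - s) ^ (α + β)) := by
  refine ⟨youngConst (α + β), youngConst_pos hαβ, ?_⟩
  intro V W _ _ _ _ _ g f Cg Cf hg hf
  -- Clamping to `[0, T]` makes the Hölder bounds global and does not change Riemann sums over
  -- partitions of subintervals of `[0, T]`.
  set π : ℝ → ℝ := fun t => Set.projIcc 0 T hT.le t
  have hπ : ∀ t ∈ Set.Icc 0 T, π t = t := fun t ht => by simp [π, Set.projIcc_of_mem _ ht]
  have hg' : HolderBound (g ∘ π) Cg α := holderBound_comp_projIcc hT hα0.le hg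
  have hf' : HolderBound (f ∘ π) Cf β := holderBound_comp_projIcc hT hβ0.le hf
  refine ⟨youngIntegral (f ∘ π) (g ∘ π), fun s t hs _ ht ε hε => ?_, fun s t hs hst ht => ?_⟩
  · obtain ⟨δ, hδ, hδε⟩ :=
      exists_pos_mul_rpow_lt (youngConst (α + β) * Cf * Cg * (t - s)) (sub_pos.2 hαβ) hε
    refine ⟨δ, hδ, fun N τ _ h0 hN hτ hmesh => ?_⟩
    have hτ' : Monotone fun i => τ (min i N) := monotone_comp_min fun i hi => (hτ i hi).le
    have hπτ : ∀ i ≤ N, π (τ i) = τ i := fun i hi => hπ _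
      ⟨hs.trans (by simpa [h0, min_eq_left hi] using hτ' (Nat.zero_le i)),
        (by simpa [hN, min_eq_left hi] using hτ' hi : τ i ≤ t).trans ht⟩
    have hRS : riemannSum (f ∘ π) (g ∘ π) (fun i => τ (min i N)) N
        = ∑ i ∈ Finset.range N, f (τ i) (g (τ (i + 1)) - g (τ i)) :=
      riemannSum_congr (f := f) (g := g) (τ := π ∘ fun i => τ (min i N)) fun i hi => by
        simp [min_eq_left hi, hπτ i hi]
    rw [← hRS]
    refine (norm_riemannSum_sub_youngIntegral_le hf' hg' hα0.le hβ0.le hαβ hτ' (by simp [h0])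
      (by simp [hN]) fun i hi => ?_).trans_lt hδε
    simpa [min_eq_left hi.le, min_eq_left (Nat.succ_le_of_lt hi)] using (hmesh i hi).le
  · simpa [hπ s ⟨hs, hst.trans ht⟩, hπ t ⟨hs.trans hst, ht⟩] using
      norm_youngIntegral_sub_le hf' hg' hα0.le hβ0.le hαβ hst

/-- Young integral: if `g` is `α`-Hölder and `f` is `β`-Hölder with
values in `L(V,W)` and `α + β > 1`, the Riemann sums `∑ f_u (g_v - g_u)` converge
for every `s < t`, and the limit `I s t = ∫_s^t f dg` satisfies
`‖I s t - f s (g t - g s)‖ ≤ C ‖f‖_β ‖g‖_α (t-s)^(α+β)` where `C` depends only on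
`α + β` (it is chosen before `V`, `W`, `f`, `g`). -/
theorem young_integral
    (α β T : ℝ) (hα0 : 0 < α) (hα1 : α ≤ 1) (hβ0 : 0 < β) (hβ1 : β ≤ 1)
    (hαβ : 1 < α + β) (hT : 0 < T) :
    ∃ C : ℝ, 0 < C ∧
      ∀ (V W : Type) (_ : NormedAddCommGroup V) (_ : NormedSpace ℝ V),
      ∀ (_ : NormedAddCommGroup W) (_ : NormedSpace ℝ W) (_ : CompleteSpace W),
      ∀ (g : ℝ → V) (f : ℝ → V →L[ℝ] W) (Cg Cf : ℝ),
        (∀ s t, 0 ≤ s → s ≤ t → t ≤ T → ‖g t - g s‖ ≤ Cg * (t - s) ^ α) →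
        (∀ s t, 0 ≤ s → s ≤ t → t ≤ T → ‖f t - f s‖ ≤ Cf * (t - s) ^ β) →
        ∃ I : ℝ → ℝ → W,
          (∀ s t, 0 ≤ s → s ≤ t → t ≤ T → ∀ ε > 0, ∃ δ > 0,
            ∀ (N : ℕ) (τ : ℕ → ℝ), 0 < N → τ 0 = s → τ N = t →
              (∀ i < N, τ i < τ (i + 1)) → (∀ i < N, τ (i + 1) - τ i < δ) →
              ‖(∑ i ∈ Finset.range N, f (τ i) (g (τ (i + 1)) - g (τ i))) - I s t‖ < ε) ∧
          (∀ s t, 0 ≤ s → s ≤ t → t ≤ T →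
            ‖I s t - f s (g t - g s)‖ ≤ C * Cf * Cg * (t - s) ^ (α + β)) :=
  young_integral_general α β T hα0 hβ0 hαβ hT
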